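/- Denominator-error-only identity after two iterations: let A, B, rec be reals with B ≠ 0, Q = A/B, ε₀ = 1 - B·rec. Suppose N₀ = A·rec, D₀ = B·rec - d₀, F₀ = 2 - D₀, N₁ = N₀·F₀, D₁ = D₀·F₀ - d₁, F₁ = 2 - D₁, N₂ = N₁·F₁, D₂ = D₁·F₁ - d₂, where d₀, d₁, d₂ are reals. Define ε₀' = ε₀ + d₀, ε₁' = ε₀'² + d₁, ε₂' = ε₁'² + d₂. Then D₀ = 1 - ε₀', F₀ = 1 + ε₀', D₁ = 1 - ε₁', F₁ = 1 + ε₁', D₂ = 1 - ε₂', and N₂ = Q·(1 - ε₂') + Q·d₀·F₀·F₁ + Q·d₁·F₁ + Q·d₂. -/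

import Mathlib

/-!
Both claims follow from two one-step invariants of the iteration `N ↦ N F`, `D ↦ D F - d`,
`F = 2 - D`. If `D = 1 - ε`, then `F = 1 + ε` and `D F = 1 - ε²`, so the next denominator is
`1 - (ε² + d)`. And the numerator defect `N - Q D` is multiplied by `F` and gains `Q d` at each
step; it starts at `N₀ - Q D₀ = Q d₀` because `Q B = A`.
-/

section GoldschmidtStep

variable {R : Type*} [CommRing R]

theorem goldschmidt_factor_eq {D ε : R} (h : D = 1 - ε) : 2 - D = 1 + ε := by
  rw [h]; ring

theorem goldschmidt_denominator_step {D ε : R} (d : R) (h : D = 1 - ε) :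
    D * (2 - D) - d = 1 - (ε ^ 2 + d) := by
  rw [h]; ring

theorem goldschmidt_numerator_defect_step {Q N D e : R} (F d : R) (h : N - Q * D = e) :
    N * F - Q * (D * F - d) = e * F + Q * d := by
  rw [← h]; ring

end GoldschmidtStep

/-- Denominator-error-only identity after two Goldschmidt iterations. -/
theorem denominator_error_two_iterations
    (A B rec Q ε₀ d₀ d₁ d₂ N₀ D₀ F₀ N₁ D₁ F₁ N₂ D₂ ε₀' ε₁' ε₂' : ℝ)
    (hB : B ≠ 0) (hQ : Q = A / B) (hε : ε₀ = 1 - B * rec)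
    (hN₀ : N₀ = A * rec) (hD₀ : D₀ = B * rec - d₀)
    (hF₀ : F₀ = 2 - D₀)
    (hN₁ : N₁ = N₀ * F₀) (hD₁ : D₁ = D₀ * F₀ - d₁)
    (hF₁ : F₁ = 2 - D₁)
    (hN₂ : N₂ = N₁ * F₁) (hD₂ : D₂ = D₁ * F₁ - d₂)
    (hε₀' : ε₀' = ε₀ + d₀) (hε₁' : ε₁' = ε₀' ^ 2 + d₁)
    (hε₂' : ε₂' = ε₁' ^ 2 + d₂) :
    D₀ = 1 - ε₀' ∧ F₀ = 1 + ε₀' ∧ D₁ = 1 - ε₁' ∧ F₁ = 1 + ε₁' ∧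
      D₂ = 1 - ε₂' ∧
      N₂ = Q * (1 - ε₂') + Q * d₀ * F₀ * F₁ + Q * d₁ * F₁ + Q * d₂ := by
  have hD₀' : D₀ = 1 - ε₀' := by rw [hD₀, hε₀', hε]; ring
  have hD₁' : D₁ = 1 - ε₁' := by
    rw [hD₁, hF₀, hε₁', goldschmidt_denominator_step d₁ hD₀']
  have hD₂' : D₂ = 1 - ε₂' := by
    rw [hD₂, hF₁, hε₂', goldschmidt_denominator_step d₂ hD₁']
  have hdefect₀ : N₀ - Q * D₀ = Q * d₀ := by
    rw [hN₀, hD₀, hQ]; field_simp; ring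
  have hdefect₁ : N₁ - Q * D₁ = Q * d₀ * F₀ + Q * d₁ := by
    rw [hN₁, hD₁, goldschmidt_numerator_defect_step F₀ d₁ hdefect₀]
  have hdefect₂ : N₂ - Q * D₂ = Q * d₀ * F₀ * F₁ + Q * d₁ * F₁ + Q * d₂ := by
    rw [hN₂, hD₂, goldschmidt_numerator_defect_step F₁ d₂ hdefect₁]; ring
  refine ⟨hD₀', hF₀ ▸ goldschmidt_factor_eq hD₀', hD₁', hF₁ ▸ goldschmidt_factor_eq hD₁', hD₂',
    ?_⟩
  rw [← hD₂']
  linear_combination hdefect₂
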